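/- Let a = 10/√11 and k = 1/(2·11^{1/4}) (so k² = 1/(4√11)). Then the real function U(Z) = (4√30/√11) · (1 − tanh²(kZ)) tanh(kZ) / (1 + tanh²(kZ))² is a smooth real-valued solution of the stationary Swift–Hohenberg equation U⁗ + aU″ + U³ − U = 0 on all of ℝ, and U(Z) → 0 as Z → +∞ and as Z → −∞ (so U is homoclinic to 0). -/

import Mathlib

open Filter Topology

noncomputable section

/-- `k = 1/(2·11^{1/4})`. -/
def kSH : ℝ := 1 / (2 * (11:ℝ) ^ ((1:ℝ)/4))

/-- The homoclinic solution `U(Z) = (4√30/√11)(1 − tanh²(kZ)) tanh(kZ)/(1 + tanh²(kZ))²`. -/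
def USH : ℝ → ℝ := fun Z =>
  (4 * Real.sqrt 30 / Real.sqrt 11) *
    ((1 - Real.tanh (kSH * Z)^2) * Real.tanh (kSH * Z)) / (1 + Real.tanh (kSH * Z)^2)^2

/-!
By the double-angle formulas, `U(Z) = C · g(2kZ)` with `C = 2√30/√11` and `g = sinh / cosh²`.
Each derivative of `g` is a polynomial in `sinh, cosh` over a power of `cosh`, and a direct
computation with `cosh² − sinh² = 1` gives `g⁗ + 10 g″ + 120 g³ − 11 g = 0`. Since `(2k)² = 1/√11`
and `C² = 120/11`, rescaling turns this into the Swift–Hohenberg equation with `a = 10/√11`.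
Decay follows from `|g| ≤ 1 / cosh`.
-/

open Real

namespace Real

theorem deriv_div_cosh_pow {f : ℝ → ℝ} {w : ℝ} (hf : DifferentiableAt ℝ f w) (n : ℕ) :
    deriv (fun x => f x / cosh x ^ n) w
      = (deriv f w * cosh w - n * f w * sinh w) / cosh w ^ (n + 1) := by
  have hcosh : cosh w ≠ 0 := (cosh_pos w).ne'
  rw [(hf.hasDerivAt.fun_div ((hasDerivAt_cosh w).fun_pow n) (pow_ne_zero n hcosh)).deriv]
  rcases n with _ | n
  · simp [hcosh]
  · field_simp
    push_cast
    ring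

theorem abs_sinh_le_cosh (w : ℝ) : |sinh w| ≤ cosh w := by
  rw [abs_sinh, ← cosh_abs w]
  exact (sinh_lt_cosh |w|).le

theorem tendsto_cosh_cocompact : Tendsto cosh (cocompact ℝ) atTop := by
  have hexp : Tendsto (fun w : ℝ => exp ‖w‖ / 2) (cocompact ℝ) atTop :=
    (tendsto_exp_atTop.comp tendsto_norm_cocompact_atTop).atTop_div_const two_pos
  refine tendsto_atTop_mono (fun w => ?_) hexp
  rw [← cosh_abs, cosh_eq, Real.norm_eq_abs]
  linarith [exp_pos (-|w|)]

end Real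

def sinhDivCoshSq (w : ℝ) : ℝ := sinh w / cosh w ^ 2

theorem contDiff_sinhDivCoshSq : ContDiff ℝ ⊤ sinhDivCoshSq :=
  contDiff_sinh.div (contDiff_cosh.pow 2) fun w => pow_ne_zero 2 (cosh_pos w).ne'

theorem iteratedDeriv_one_sinhDivCoshSq :
    iteratedDeriv 1 sinhDivCoshSq = fun w => (cosh w ^ 2 - 2 * sinh w ^ 2) / cosh w ^ 3 := by
  funext w
  rw [iteratedDeriv_one, show sinhDivCoshSq = fun x => sinh x / cosh x ^ 2 from rfl,
    deriv_div_cosh_pow differentiableAt_sinh, Real.deriv_sinh]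
  ring

theorem iteratedDeriv_two_sinhDivCoshSq :
    iteratedDeriv 2 sinhDivCoshSq
      = fun w => (6 * sinh w ^ 3 - 5 * sinh w * cosh w ^ 2) / cosh w ^ 4 := by
  funext w
  rw [iteratedDeriv_succ, iteratedDeriv_one_sinhDivCoshSq, deriv_div_cosh_pow (by fun_prop)]
  simp (disch := fun_prop) only [deriv_fun_sub, deriv_fun_mul, deriv_fun_pow, deriv_const,
    Real.deriv_sinh, Real.deriv_cosh]
  ring

theorem iteratedDeriv_three_sinhDivCoshSq :
    iteratedDeriv 3 sinhDivCoshSq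
      = fun w => (28 * sinh w ^ 2 * cosh w ^ 2 - 24 * sinh w ^ 4 - 5 * cosh w ^ 4) / cosh w ^ 5 := by
  funext w
  rw [iteratedDeriv_succ, iteratedDeriv_two_sinhDivCoshSq, deriv_div_cosh_pow (by fun_prop)]
  simp (disch := fun_prop) only [deriv_fun_sub, deriv_fun_mul, deriv_fun_pow, deriv_const,
    Real.deriv_sinh, Real.deriv_cosh]
  ring

theorem iteratedDeriv_four_sinhDivCoshSq :
    iteratedDeriv 4 sinhDivCoshSq
      = fun w => (120 * sinh w ^ 5 - 180 * sinh w ^ 3 * cosh w ^ 2 + 61 * sinh w * cosh w ^ 4)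
          / cosh w ^ 6 := by
  funext w
  rw [iteratedDeriv_succ, iteratedDeriv_three_sinhDivCoshSq, deriv_div_cosh_pow (by fun_prop)]
  simp (disch := fun_prop) only [deriv_fun_sub, deriv_fun_mul, deriv_fun_pow, deriv_const,
    Real.deriv_sinh, Real.deriv_cosh]
  ring

theorem sinhDivCoshSq_ode (w : ℝ) :
    iteratedDeriv 4 sinhDivCoshSq w + 10 * iteratedDeriv 2 sinhDivCoshSq w
      + 120 * sinhDivCoshSq w ^ 3 - 11 * sinhDivCoshSq w = 0 := by
  have hcosh : cosh w ≠ 0 := (cosh_pos w).ne'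
  rw [iteratedDeriv_four_sinhDivCoshSq, iteratedDeriv_two_sinhDivCoshSq, sinhDivCoshSq]
  field_simp
  linear_combination (-120 * sinh w ^ 3) * cosh_sq w

theorem abs_sinhDivCoshSq_le (w : ℝ) : |sinhDivCoshSq w| ≤ (cosh w)⁻¹ := by
  have hcosh := cosh_pos w
  calc |sinhDivCoshSq w| = |sinh w| / cosh w ^ 2 := by
        rw [sinhDivCoshSq, abs_div, abs_pow, abs_of_pos hcosh]
    _ ≤ cosh w / cosh w ^ 2 := by gcongr; exact abs_sinh_le_cosh w
    _ = (cosh w)⁻¹ := by field_simp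

theorem tendsto_sinhDivCoshSq_cocompact : Tendsto sinhDivCoshSq (cocompact ℝ) (𝓝 0) :=
  squeeze_zero_norm abs_sinhDivCoshSq_le tendsto_cosh_cocompact.inv_tendsto_atTop

theorem USH_eq_sinhDivCoshSq :
    USH = fun Z => 2 * √30 / √11 * sinhDivCoshSq (2 * kSH * Z) := by
  funext Z
  have hcosh : cosh (kSH * Z) ≠ 0 := (cosh_pos _).ne'
  rw [USH, sinhDivCoshSq, mul_assoc, sinh_two_mul, cosh_two_mul, tanh_eq_sinh_div_cosh]
  field_simp
  rw [cosh_sq_sub_sinh_sq]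
  ring

theorem sq_two_mul_kSH : (2 * kSH) ^ 2 = (√11)⁻¹ := by
  have h : ((11 : ℝ) ^ ((1 : ℝ) / 4)) ^ 2 = √11 := by
    rw [← rpow_natCast, ← rpow_mul (by norm_num), sqrt_eq_rpow]
    norm_num
  rw [kSH]
  field_simp
  exact h.symm

theorem contDiff_USH : ContDiff ℝ ⊤ USH := by
  rw [USH_eq_sinhDivCoshSq]
  exact contDiff_const.mul (contDiff_sinhDivCoshSq.comp (contDiff_const.mul contDiff_id))

theorem iteratedDeriv_USH (n : ℕ) (Z : ℝ) :
    iteratedDeriv n USH Z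
      = 2 * √30 / √11 * ((2 * kSH) ^ n * iteratedDeriv n sinhDivCoshSq (2 * kSH * Z)) := by
  rw [USH_eq_sinhDivCoshSq, iteratedDeriv_const_mul_field,
    iteratedDeriv_comp_const_mul (contDiff_sinhDivCoshSq.of_le le_top)]

theorem USH_ode (Z : ℝ) :
    iteratedDeriv 4 USH Z + (10 / √11) * iteratedDeriv 2 USH Z + USH Z ^ 3 - USH Z = 0 := by
  have h := sinhDivCoshSq_ode (2 * kSH * Z)
  rw [iteratedDeriv_USH, iteratedDeriv_USH, USH_eq_sinhDivCoshSq,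
    show (2 * kSH) ^ 4 = ((2 * kSH) ^ 2) ^ 2 by ring, sq_two_mul_kSH]
  field_simp
  rw [sq_sqrt (by norm_num), sq_sqrt (by norm_num)]
  linear_combination 2 * √30 * h

theorem tendsto_USH_cocompact : Tendsto USH (cocompact ℝ) (𝓝 0) := by
  have hk : 2 * kSH ≠ 0 := by rw [kSH]; positivity
  rw [USH_eq_sinhDivCoshSq, ← mul_zero (2 * √30 / √11)]
  exact (tendsto_sinhDivCoshSq_cocompact.comp (tendsto_cocompact_mul_left₀ hk)).const_mul _

/-- For `a = 10/√11`, the function `USH` is a smooth real-valued solution of the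
stationary Swift–Hohenberg equation `U⁗ + aU″ + U³ − U = 0` on `ℝ`, homoclinic to `0`. -/
theorem USH_is_smooth_homoclinic_solution :
    (∀ n : ℕ, ContDiff ℝ n USH) ∧
    (∀ Z : ℝ, iteratedDeriv 4 USH Z + (10 / Real.sqrt 11) * iteratedDeriv 2 USH Z
      + (USH Z)^3 - USH Z = 0) ∧
    Tendsto USH atTop (𝓝 0) ∧ Tendsto USH atBot (𝓝 0) :=
  ⟨fun _ => contDiff_USH.of_le le_top, USH_ode,
    tendsto_USH_cocompact.mono_left atTop_le_cocompact,
    tendsto_USH_cocompact.mono_left atBot_le_cocompact⟩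

end
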